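/- Let L ≥ 1 be an integer, r > 1 and 0 < x < 1 real numbers, ε : {1,…,L+1} → {0,1} any map, and m ≥ 1 an integer. For 1 ≤ j ≤ L set σ_j = −1 if ε_j ≠ ε_{j+1}, σ_j = −[m]_x [2(r−1)m]_x/([rm]_x [(r−1)m]_x) if ε_j = ε_{j+1} = 1, and σ_j = −[(r−1)m]_x [2m]_x/([rm]_x [m]_x) if ε_j = ε_{j+1} = 0; and for 2 ≤ j ≤ L set γ_j = [m]_x if ε_j = 1 and γ_j = [(r−1)m]_x if ε_j = 0. Let A(m) be the L×L real tridiagonal matrix with A_{k,k}(m) = 1 (1 ≤ k ≤ L), A_{j−1,j}(m) = γ_j/([rm]_x · σ_j) and A_{j,j−1}(m) = γ_j/([rm]_x · σ_{j−1}) for 2 ≤ j ≤ L, and all other entries 0. Set n₊ = #{1 ≤ j ≤ L+1 : ε_j = 1}, n₋ = #{1 ≤ j ≤ L+1 : ε_j = 0}, and a = (r−1)n₊ + n₋. Then det A(m) = (−1)^L · [a m]_x [(r−1)m]_x^{n₋−1} [m]_x^{n₊−1} / ([rm]_x^{L} · ∏_{j=1}^{L} σ_j); in particular det A(m) ≠ 0.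 Moreover the corresponding matrix A(−m) is the transpose of A(m), so the same formula holds for all nonzero integers m. (This is the m ≠ 0 case of Lemma 3.12, with the explicit values s_j(m) = 1 and s_j(−m) = σ_j from Theorem 3.1.) -/

import Mathlib

/-- The q-integer `[n]_x = (x^n - x^{-n})/(x - x^{-1})`, with real powers of `x`. -/
noncomputable def qint (x n : ℝ) : ℝ := (x ^ n - x ^ (-n)) / (x - x⁻¹)

/-- The quantity `σ_j = s_j(-m)` from Theorem 3.1 (1-based index `j`). -/
noncomputable def sigmaj (x r : ℝ) (m : ℝ) (ε : ℕ → Bool) (j : ℕ) : ℝ :=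
  if ε j ≠ ε (j + 1) then -1
  else if ε (j + 1) then
    -(qint x m * qint x (2 * (r - 1) * m)) / (qint x (r * m) * qint x ((r - 1) * m))
  else -(qint x ((r - 1) * m) * qint x (2 * m)) / (qint x (r * m) * qint x m)

/-- The quantity `γ_j`: `[m]_x` if `ε_j = 1` and `[(r-1)m]_x` if `ε_j = 0`. -/
noncomputable def gamj (x r : ℝ) (m : ℝ) (ε : ℕ → Bool) (j : ℕ) : ℝ :=
  if ε j then qint x m else qint x ((r - 1) * m)

/-- The entry `A_{k,l}(m)` (1-based indices) of the tridiagonal matrix `A(m)`, `m > 0`: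
`A_{k,k}(m) = 1`, `A_{j-1,j}(m) = γ_j/([rm]_x σ_j)`, `A_{j,j-1}(m) = γ_j/([rm]_x σ_{j-1})`. -/
noncomputable def Ament (x r : ℝ) (m : ℝ) (ε : ℕ → Bool) (k l : ℕ) : ℝ :=
  if k = l then 1
  else if l = k + 1 then gamj x r m ε l / (qint x (r * m) * sigmaj x r m ε l)
  else if k = l + 1 then gamj x r m ε k / (qint x (r * m) * sigmaj x r m ε l)
  else 0

/-- The `L × L` matrix `(A_{i,j}(m))_{i,j=1}^L`. -/
noncomputable def matAm (L : ℕ) (x r : ℝ) (m : ℝ) (ε : ℕ → Bool) : Matrix (Fin L) (Fin L) ℝ :=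
  Matrix.of fun k l => Ament x r m ε ((k : ℕ) + 1) ((l : ℕ) + 1)

/-- The number `n₊ = #{1 ≤ j ≤ L+1 : ε_j = 1}`. -/
def nPlus (L : ℕ) (ε : ℕ → Bool) : ℕ :=
  ((Finset.Icc 1 (L + 1)).filter fun j => ε j = true).card

/-- The number `n₋ = #{1 ≤ j ≤ L+1 : ε_j = 0}`. -/
def nMinus (L : ℕ) (ε : ℕ → Bool) : ℕ :=
  ((Finset.Icc 1 (L + 1)).filter fun j => ε j = false).card

/-- The claimed value of `det A(m)` in Lemma 3.12 (`m ≠ 0` case), with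
`a = (r-1)n₊ + n₋`. -/
noncomputable def detVal (L : ℕ) (x r : ℝ) (m : ℝ) (ε : ℕ → Bool) : ℝ :=
  (-1 : ℝ) ^ L * qint x (((r - 1) * (nPlus L ε : ℝ) + (nMinus L ε : ℝ)) * m) *
      qint x ((r - 1) * m) ^ ((nMinus L ε : ℤ) - 1) * qint x m ^ ((nPlus L ε : ℤ) - 1) /
    (qint x (r * m) ^ L * ∏ j ∈ Finset.Icc 1 L, sigmaj x r m ε j)

/-!
Expanding along the last row, the leading principal minors `D_n` of the tridiagonal matrix satisfy
`D_{n+2} = D_{n+1} - A_{n+1,n+2} A_{n+2,n+1} D_n` with `D_0 = D_1 = 1`. With `u_j = weight r m ε j`,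
equal to `(r-1)m` if `ε_j = 1` and to `m` if `ε_j = 0`, the claimed value of `D_n` is
`(-1)^n [u_1 + ⋯ + u_{n+1}]_x ∏_{j ≤ n+1} γ_j / ([m]_x [(r-1)m]_x [rm]_x^n ∏_{j ≤ n} σ_j)`,
and it satisfies the same recursion by Ptolemy's identity `[b+c+d][c] + [d][b] = [c+d][b+c]`
for q-integers, applied with `b = u_1 + ⋯ + u_{j-1}`, `c = u_j`, `d = u_{j+1}`.
The value is nonzero because q-integers of positive numbers are positive and every `σ_j` is
negative.
-/

theorem Matrix.det_succ_eq_mul_det_submatrix_of_col_last {R : Type*} [CommRing R] {n : ℕ}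
    (A : Matrix (Fin (n + 1)) (Fin (n + 1)) R) (h : ∀ i : Fin n, A i.castSucc (Fin.last n) = 0) :
    A.det = A (Fin.last n) (Fin.last n) * (A.submatrix Fin.castSucc Fin.castSucc).det := by
  rw [Matrix.det_succ_column A (Fin.last n), Fin.sum_univ_castSucc]
  simp [h, Fin.succAbove_last]

theorem Matrix.det_of_tridiagonal {R : Type*} [CommRing R] (e : ℕ → ℕ → R)
    (he : ∀ i j, i + 2 ≤ j ∨ j + 2 ≤ i → e i j = 0) (n : ℕ) :
    (Matrix.of fun i j : Fin (n + 2) => e i j).det =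
      e (n + 1) (n + 1) * (Matrix.of fun i j : Fin (n + 1) => e i j).det
        - e n (n + 1) * e (n + 1) n * (Matrix.of fun i j : Fin n => e i j).det := by
  rw [Matrix.det_succ_row _ (Fin.last (n + 1)), Fin.sum_univ_castSucc, Fin.sum_univ_castSucc,
    Finset.sum_eq_zero fun j _ => by simp [he (n + 1) j (by omega)], zero_add,
    Matrix.det_succ_eq_mul_det_submatrix_of_col_last]
  · have hsign : (-1 : R) ^ (n + 1 + n) = -1 := Odd.neg_one_pow ⟨n, by ring⟩
    have hminor₁ : (Matrix.of fun i j : Fin (n + 2) => e i j).submatrix Fin.castSucc Fin.castSucc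
        = Matrix.of fun i j : Fin (n + 1) => e i j := by
      ext; simp
    have hminor₂ : (Matrix.of fun i j : Fin (n + 2) => e i j).submatrix
        (Fin.castSucc ∘ Fin.castSucc) ((Fin.last n).castSucc.succAbove ∘ Fin.castSucc)
        = Matrix.of fun i j : Fin n => e i j := by
      ext i j; simp [Fin.succAbove_castSucc_of_lt _ _ (Fin.castSucc_lt_last j)]
    simp only [Fin.val_last, Fin.val_castSucc, hsign, of_apply, neg_mul, one_mul,
      Fin.succAbove_last, submatrix_apply, ne_eq, Fin.castSucc_ne_last, not_false_eq_true,
      Fin.succAbove_ne_last_last, submatrix_submatrix, hminor₂, Even.add_self, Even.neg_pow, one_pow,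
      hminor₁]
    ring
  · intro i
    simp [he i (n + 1) (by omega)]

theorem qint_zero (x : ℝ) : qint x 0 = 0 := by simp [qint]

theorem qint_pos {x t : ℝ} (hx0 : 0 < x) (hx1 : x ≠ 1) (ht : 0 < t) : 0 < qint x t := by
  rcases hx1.lt_or_gt with hx1 | hx1
  · have hpow : x ^ t < x ^ (-t) := Real.rpow_lt_rpow_of_exponent_gt hx0 hx1 (by linarith)
    have hinv : x < x⁻¹ := hx1.trans ((one_lt_inv₀ hx0).mpr hx1)
    exact div_pos_of_neg_of_neg (by linarith) (by linarith)
  · have hpow : x ^ (-t) < x ^ t := Real.rpow_lt_rpow_of_exponent_lt hx1 (by linarith)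
    have hinv : x⁻¹ < x := (inv_lt_one_of_one_lt₀ hx1).trans hx1
    exact div_pos (by linarith) (by linarith)

/-- `[t]_x` is proportional to `sinh (t log x)`, and this is Ptolemy's identity for `sinh`. -/
theorem qint_ptolemy {x : ℝ} (hx0 : 0 < x) (b c d : ℝ) :
    qint x (b + c + d) * qint x c + qint x d * qint x b = qint x (c + d) * qint x (b + c) := by
  have hb := (Real.rpow_pos_of_pos hx0 b).ne'
  have hc := (Real.rpow_pos_of_pos hx0 c).ne'
  have hd := (Real.rpow_pos_of_pos hx0 d).ne'
  simp only [qint, div_mul_div_comm, ← add_div, Real.rpow_neg hx0.le, Real.rpow_add hx0]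
  congr 1
  field_simp
  ring

noncomputable def weight (r m : ℝ) (ε : ℕ → Bool) (j : ℕ) : ℝ := if ε j then (r - 1) * m else m

section

variable {x r m : ℝ} {ε : ℕ → Bool}

theorem weight_pos (hr : 1 < r) (hm : 0 < m) (j : ℕ) : 0 < weight r m ε j := by
  unfold weight; split_ifs <;> nlinarith

theorem gamj_pos (hx0 : 0 < x) (hx1 : x ≠ 1) (hr : 1 < r) (hm : 0 < m) (j : ℕ) :
    0 < gamj x r m ε j := by
  unfold gamj; split_ifs <;> exact qint_pos hx0 hx1 (by nlinarith)

theorem gamj_mul_qint_weight (j : ℕ) :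
    gamj x r m ε j * qint x (weight r m ε j) = qint x m * qint x ((r - 1) * m) := by
  unfold gamj weight; split_ifs <;> ring

theorem sigmaj_neg (hx0 : 0 < x) (hx1 : x ≠ 1) (hr : 1 < r) (hm : 0 < m) (j : ℕ) :
    sigmaj x r m ε j < 0 := by
  have hqm := qint_pos hx0 hx1 hm
  have hqr1 := qint_pos hx0 hx1 (show 0 < (r - 1) * m by nlinarith)
  have hqr := qint_pos hx0 hx1 (show 0 < r * m by nlinarith)
  have hq2m := qint_pos hx0 hx1 (show 0 < 2 * m by linarith)
  have hq2r1 := qint_pos hx0 hx1 (show 0 < 2 * (r - 1) * m by nlinarith)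
  unfold sigmaj
  split_ifs
  · exact neg_one_lt_zero
  · exact div_neg_of_neg_of_pos (by nlinarith) (by positivity)
  · exact div_neg_of_neg_of_pos (by nlinarith) (by positivity)

theorem sum_weight_Icc (L : ℕ) :
    ∑ j ∈ Finset.Icc 1 (L + 1), weight r m ε j = ((r - 1) * nPlus L ε + nMinus L ε) * m := by
  simp only [weight, Finset.sum_ite, Finset.sum_const, nsmul_eq_mul, nPlus, nMinus,
    Bool.not_eq_true]
  ring

theorem prod_gamj_Icc (L : ℕ) :
    ∏ j ∈ Finset.Icc 1 (L + 1), gamj x r m ε j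
      = qint x m ^ nPlus L ε * qint x ((r - 1) * m) ^ nMinus L ε := by
  simp only [gamj, Finset.prod_ite, Finset.prod_const, nPlus, nMinus, Bool.not_eq_true]

theorem detVal_eq (hqm : qint x m ≠ 0) (hqr1 : qint x ((r - 1) * m) ≠ 0) (L : ℕ) :
    detVal L x r m ε
      = (-1) ^ L * qint x (∑ j ∈ Finset.Icc 1 (L + 1), weight r m ε j)
          * (∏ j ∈ Finset.Icc 1 (L + 1), gamj x r m ε j)
        / (qint x m * qint x ((r - 1) * m)
          * (qint x (r * m) ^ L * ∏ j ∈ Finset.Icc 1 L, sigmaj x r m ε j)) := by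
  rw [detVal, sum_weight_Icc, prod_gamj_Icc, zpow_sub_one₀ hqm, zpow_sub_one₀ hqr1,
    zpow_natCast, zpow_natCast]
  field_simp

theorem qint_add_weight_add_weight_mul_gamj (hx0 : 0 < x) (hx1 : x ≠ 1) (hr : 1 < r)
    (hm : 0 < m) (b : ℝ) (j : ℕ) :
    qint x (b + weight r m ε j + weight r m ε (j + 1)) * gamj x r m ε (j + 1)
        + gamj x r m ε j * qint x b
      = -(qint x (r * m) * sigmaj x r m ε j) * qint x (b + weight r m ε j) := by
  have hqm := (qint_pos hx0 hx1 hm).ne'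
  have hqr1 := (qint_pos hx0 hx1 (show 0 < (r - 1) * m by nlinarith)).ne'
  have hqr := (qint_pos hx0 hx1 (show 0 < r * m by nlinarith)).ne'
  have hqσ : ∀ u p : ℝ, -(qint x (r * m) * (-u / (qint x (r * m) * p))) = u / p := by
    intro u p
    field_simp
  have key := qint_ptolemy hx0 b (weight r m ε j) (weight r m ε (j + 1))
  unfold gamj sigmaj
  unfold weight at key ⊢
  cases hj : ε j <;> cases hj1 : ε (j + 1) <;>
    simp only [hj, hj1, if_true, if_false, Bool.false_eq_true, Bool.true_eq_false, ne_eq,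
      not_true_eq_false, not_false_eq_true] at key ⊢
  · rw [hqσ (qint x ((r - 1) * m) * qint x (2 * m)) (qint x m), two_mul, div_mul_eq_mul_div,
      eq_div_iff hqm]
    linear_combination qint x ((r - 1) * m) * key
  · rw [show m + (r - 1) * m = r * m by ring] at key
    linear_combination key
  · rw [show (r - 1) * m + m = r * m by ring] at key
    linear_combination key
  · rw [hqσ, show 2 * (r - 1) * m = (r - 1) * m + (r - 1) * m by ring, div_mul_eq_mul_div,
      eq_div_iff hqr1]
    linear_combination qint x m * key

theorem detVal_zero (hx0 : 0 < x) (hx1 : x ≠ 1) (hr : 1 < r) (hm : 0 < m) :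
    detVal 0 x r m ε = 1 := by
  have hqm := (qint_pos hx0 hx1 hm).ne'
  have hqr1 := (qint_pos hx0 hx1 (show 0 < (r - 1) * m by nlinarith)).ne'
  rw [detVal_eq hqm hqr1]
  simp only [zero_add, Finset.Icc_self, Finset.sum_singleton, Finset.prod_singleton, pow_zero,
    one_mul, Finset.Icc_eq_empty_of_lt one_pos, Finset.prod_empty, mul_one]
  rw [mul_comm, gamj_mul_qint_weight, div_self (mul_ne_zero hqm hqr1)]

theorem detVal_one (hx0 : 0 < x) (hx1 : x ≠ 1) (hr : 1 < r) (hm : 0 < m) :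
    detVal 1 x r m ε = 1 := by
  have hqm := (qint_pos hx0 hx1 hm).ne'
  have hqr1 := (qint_pos hx0 hx1 (show 0 < (r - 1) * m by nlinarith)).ne'
  have hqr := (qint_pos hx0 hx1 (show 0 < r * m by nlinarith)).ne'
  have hσ := (sigmaj_neg (ε := ε) hx0 hx1 hr hm 1).ne
  have three := qint_add_weight_add_weight_mul_gamj (ε := ε) hx0 hx1 hr hm 0 1
  have hc := gamj_mul_qint_weight (x := x) (r := r) (m := m) (ε := ε) 1
  rw [detVal_eq hqm hqr1]
  simp only [zero_add, qint_zero, mul_zero, add_zero] at three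
  simp only [Finset.sum_Icc_succ_top, Finset.prod_Icc_succ_top, Nat.one_le_ofNat, Finset.Icc_self,
    Finset.sum_singleton, Finset.prod_singleton, Nat.reduceAdd, pow_one, neg_mul, one_mul]
  field_simp
  linear_combination -gamj x r m ε 1 * three + qint x (r * m) * sigmaj x r m ε 1 * hc

theorem detVal_succ_succ (hx0 : 0 < x) (hx1 : x ≠ 1) (hr : 1 < r) (hm : 0 < m) (n : ℕ) :
    detVal (n + 2) x r m ε = detVal (n + 1) x r m ε
      - gamj x r m ε (n + 2) / (qint x (r * m) * sigmaj x r m ε (n + 2))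
        * (gamj x r m ε (n + 2) / (qint x (r * m) * sigmaj x r m ε (n + 1))) * detVal n x r m ε := by
  have hqm := (qint_pos hx0 hx1 hm).ne'
  have hqr1 := (qint_pos hx0 hx1 (show 0 < (r - 1) * m by nlinarith)).ne'
  have hqr := (qint_pos hx0 hx1 (show 0 < r * m by nlinarith)).ne'
  have hσ := fun j => (sigmaj_neg (ε := ε) hx0 hx1 hr hm j).ne
  rw [detVal_eq hqm hqr1, detVal_eq hqm hqr1, detVal_eq hqm hqr1]
  set S := ∑ j ∈ Finset.Icc 1 (n + 1), weight r m ε j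
  set P := ∏ j ∈ Finset.Icc 1 (n + 1), gamj x r m ε j
  set T := ∏ j ∈ Finset.Icc 1 n, sigmaj x r m ε j
  have hT : T ≠ 0 := Finset.prod_ne_zero_iff.mpr fun j _ => hσ j
  have hS₁ : ∑ j ∈ Finset.Icc 1 (n + 1 + 1), weight r m ε j = S + weight r m ε (n + 2) := by
    rw [Finset.sum_Icc_succ_top (by omega)]
  have hS₂ : ∑ j ∈ Finset.Icc 1 (n + 2 + 1), weight r m ε j
      = S + weight r m ε (n + 2) + weight r m ε (n + 3) := by
    rw [Finset.sum_Icc_succ_top (by omega), Finset.sum_Icc_succ_top (by omega)]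
  have hP₁ : ∏ j ∈ Finset.Icc 1 (n + 1 + 1), gamj x r m ε j = P * gamj x r m ε (n + 2) := by
    rw [Finset.prod_Icc_succ_top (by omega)]
  have hP₂ : ∏ j ∈ Finset.Icc 1 (n + 2 + 1), gamj x r m ε j
      = P * gamj x r m ε (n + 2) * gamj x r m ε (n + 3) := by
    rw [Finset.prod_Icc_succ_top (by omega), Finset.prod_Icc_succ_top (by omega)]
  have hT₁ : ∏ j ∈ Finset.Icc 1 (n + 1), sigmaj x r m ε j = T * sigmaj x r m ε (n + 1) := by
    rw [Finset.prod_Icc_succ_top (by omega)]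
  have hT₂ : ∏ j ∈ Finset.Icc 1 (n + 2), sigmaj x r m ε j
      = T * sigmaj x r m ε (n + 1) * sigmaj x r m ε (n + 2) := by
    rw [Finset.prod_Icc_succ_top (by omega), Finset.prod_Icc_succ_top (by omega)]
  have three := qint_add_weight_add_weight_mul_gamj (ε := ε) hx0 hx1 hr hm S (n + 2)
  rw [hS₁, hS₂, hP₁, hP₂, hT₁, hT₂]
  clear_value S P T
  have hs₁ := hσ (n + 1)
  have hs₂ := hσ (n + 2)
  generalize qint x (S + weight r m ε (n + 2) + weight r m ε (n + 3)) = A₂ at three ⊢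
  generalize qint x (S + weight r m ε (n + 2)) = A₁ at three ⊢
  generalize qint x S = A₀ at three ⊢
  field_simp
  linear_combination (-1) ^ n * P * gamj x r m ε (n + 2) * qint x (r * m) ^ (2 * n + 3) * three

theorem detVal_ne_zero (hx0 : 0 < x) (hx1 : x ≠ 1) (hr : 1 < r) (hm : 0 < m) (L : ℕ) :
    detVal L x r m ε ≠ 0 := by
  have hqm := (qint_pos hx0 hx1 hm).ne'
  have hqr1 := (qint_pos hx0 hx1 (show 0 < (r - 1) * m by nlinarith)).ne'
  have hqr := (qint_pos hx0 hx1 (show 0 < r * m by nlinarith)).ne'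
  have hS : 0 < ∑ j ∈ Finset.Icc 1 (L + 1), weight r m ε j :=
    Finset.sum_pos (fun j _ => weight_pos hr hm j) ⟨1, by simp⟩
  have hP : 0 < ∏ j ∈ Finset.Icc 1 (L + 1), gamj x r m ε j :=
    Finset.prod_pos fun j _ => gamj_pos hx0 hx1 hr hm j
  have hT : ∏ j ∈ Finset.Icc 1 L, sigmaj x r m ε j ≠ 0 :=
    Finset.prod_ne_zero_iff.mpr fun j _ => (sigmaj_neg hx0 hx1 hr hm j).ne
  rw [detVal_eq hqm hqr1]
  exact div_ne_zero
    (mul_ne_zero (mul_ne_zero (pow_ne_zero _ (by norm_num)) (qint_pos hx0 hx1 hS).ne') hP.ne')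
    (mul_ne_zero (mul_ne_zero hqm hqr1) (mul_ne_zero (pow_ne_zero _ hqr) hT))

theorem Ament_eq_zero {i j : ℕ} (h : i + 2 ≤ j ∨ j + 2 ≤ i) : Ament x r m ε i j = 0 := by
  unfold Ament
  rw [if_neg (by omega), if_neg (by omega), if_neg (by omega)]

theorem det_matAm_succ_succ (n : ℕ) :
    (matAm (n + 2) x r m ε).det = (matAm (n + 1) x r m ε).det
      - gamj x r m ε (n + 2) / (qint x (r * m) * sigmaj x r m ε (n + 2))
        * (gamj x r m ε (n + 2) / (qint x (r * m) * sigmaj x r m ε (n + 1)))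
        * (matAm n x r m ε).det := by
  have h := Matrix.det_of_tridiagonal (fun i j => Ament x r m ε (i + 1) (j + 1))
    (fun i j hij => Ament_eq_zero (by omega)) n
  have hdiag : Ament x r m ε (n + 1 + 1) (n + 1 + 1) = 1 := if_pos rfl
  have hsuper : Ament x r m ε (n + 1) (n + 1 + 1)
      = gamj x r m ε (n + 2) / (qint x (r * m) * sigmaj x r m ε (n + 2)) := by
    simp [Ament]
  have hsub : Ament x r m ε (n + 1 + 1) (n + 1)
      = gamj x r m ε (n + 2) / (qint x (r * m) * sigmaj x r m ε (n + 1)) := by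
    simp [Ament]
  rwa [hdiag, hsuper, hsub, one_mul] at h

theorem det_matAm (hx0 : 0 < x) (hx1 : x ≠ 1) (hr : 1 < r) (hm : 0 < m) (L : ℕ) :
    (matAm L x r m ε).det = detVal L x r m ε := by
  induction L using Nat.twoStepInduction with
  | zero => rw [Matrix.det_fin_zero, detVal_zero hx0 hx1 hr hm]
  | one => rw [Matrix.det_fin_one, detVal_one hx0 hx1 hr hm]; rfl
  | more n ih₀ ih₁ =>
    rw [det_matAm_succ_succ, ih₀, ih₁, detVal_succ_succ hx0 hx1 hr hm]

end

theorem statement9_general (L : ℕ) (r x : ℝ) (hr : 1 < r) (hx0 : 0 < x) (hx1 : x < 1)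
    (ε : ℕ → Bool) (m : ℕ) (hm : 1 ≤ m) :
    (matAm L x r (m : ℝ) ε).det = detVal L x r (m : ℝ) ε ∧
      (matAm L x r (m : ℝ) ε).det ≠ 0 ∧
      ((matAm L x r (m : ℝ) ε).transpose).det = detVal L x r (m : ℝ) ε := by
  have hm' : (0 : ℝ) < m := Nat.cast_pos.mpr hm
  have hdet := det_matAm (ε := ε) hx0 hx1.ne hr hm' L
  exact ⟨hdet, hdet ▸ detVal_ne_zero hx0 hx1.ne hr hm' L, by rw [Matrix.det_transpose, hdet]⟩

/-- The `m ≠ 0` case of Lemma 3.12: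
`det A(m) = (-1)^L [am]_x [(r-1)m]_x^{n₋-1} [m]_x^{n₊-1} / ([rm]_x^L ∏_j σ_j) ≠ 0`,
and, since `A(-m)` is the transpose of `A(m)`, the same formula holds for `A(-m)`. -/
theorem statement9 (L : ℕ) (hL : 1 ≤ L) (r x : ℝ) (hr : 1 < r) (hx0 : 0 < x) (hx1 : x < 1)
    (ε : ℕ → Bool) (m : ℕ) (hm : 1 ≤ m) :
    (matAm L x r (m : ℝ) ε).det = detVal L x r (m : ℝ) ε ∧
      (matAm L x r (m : ℝ) ε).det ≠ 0 ∧
      ((matAm L x r (m : ℝ) ε).transpose).det = detVal L x r (m : ℝ) ε :=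
  statement9_general L r x hr hx0 hx1 ε m hm
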